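/- arXiv:math/0503167 — 3 statements merged into one kernel-verified Lean document; each statement's English description precedes it below -/
import Mathlib

section
/- Let (F, ξ) : C → D be a monoidal functor between pivotal monoidal categories that preserves the pivotal structures. Then (1) for all objects V, W of C, E_{F(V),F(W)}(ξ⁻¹ ∘ F(f)) = ξ⁻¹ ∘ F(E_{V,W}(f)) for every f : I → V ⊗ W; and (2) for every object V and every n ≥ 1, E_{F(V)}^(n)(ξ^(n) ∘ F(g)) = ξ^(n) ∘ F(E_V^(n)(g)) for every g : I → V^⊗n, where ξ^(n) : F(V^⊗n) → F(V)^⊗n is the unique coherence isomorphism built from instances of ξ⁻¹. -/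
open CategoryTheory MonoidalCategory Functor.LaxMonoidal Functor.OplaxMonoidal

namespace FSI

variable {C : Type*} [Category C] [MonoidalCategory C] [RightRigidCategory C]
variable {D : Type*} [Category D] [MonoidalCategory D] [RightRigidCategory D]

/-- The adjunction isomorphism `A : C(I, V ⊗ W) → C(V^∨, W)`,
`A(f) = (ev_V ⊗ W) ∘ Φ⁻¹ ∘ (V^∨ ⊗ f)`. -/
def Amap (V W : C) (f : 𝟙_ C ⟶ V ⊗ W) : Vᘁ ⟶ W :=
  (ρ_ (Vᘁ)).inv ≫ (Vᘁ ◁ f) ≫ (α_ (Vᘁ) V W).inv ≫ (ε_ V (Vᘁ) ▷ W) ≫ (λ_ W).hom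

/-- The inverse of the adjunction isomorphism `A`, `A⁻¹(g) = (V ⊗ g) ∘ db_V`. -/
def Ainv (V W : C) (g : Vᘁ ⟶ W) : 𝟙_ C ⟶ V ⊗ W :=
  η_ V (Vᘁ) ≫ (V ◁ g)

/-- `B : C(V, W) → C(I, W ⊗ V^∨)`, `B(f) = (f ⊗ V^∨) ∘ db_V`. -/
def Bmap (V W : C) (f : V ⟶ W) : 𝟙_ C ⟶ W ⊗ (Vᘁ) :=
  η_ V (Vᘁ) ≫ (f ▷ (Vᘁ))

/-- `T_{V,W} : C(V^∨, W) → C(W^∨, V)`, `T(g) = j_V⁻¹ ∘ g^∨`, defined relative to a chosen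
isomorphism `j_V : V ≅ V^∨∨` (a component of a pivotal structure). -/
def Tmap {V W : C} (jV : V ≅ (Vᘁ)ᘁ) (g : Vᘁ ⟶ W) : Wᘁ ⟶ V :=
  gᘁ ≫ jV.inv

/-- `E_{V,W} = A⁻¹ ∘ T_{V,W} ∘ A : C(I, V ⊗ W) → C(I, W ⊗ V)`. -/
def Emap {V : C} (W : C) (jV : V ≅ (Vᘁ)ᘁ) (f : 𝟙_ C ⟶ V ⊗ W) : 𝟙_ C ⟶ W ⊗ V :=
  Ainv W V (Tmap jV (Amap V W f))

/-- The `n`-fold tensor power with rightmost parenthesization: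
`V^⊗0 = I`, `V^⊗(n+1) = V ⊗ V^⊗n`. -/
def pow (V : C) : ℕ → C
  | 0 => 𝟙_ C
  | n + 1 => V ⊗ pow V n

/-- The coherence isomorphism `Φ^(n+1) : V^⊗n ⊗ V ⟶ V^⊗(n+1)` built from associators
(and unitors). -/
def PhiN (V : C) : ∀ n : ℕ, pow V n ⊗ V ⟶ pow V (n + 1)
  | 0 => (λ_ V).hom ≫ (ρ_ V).inv
  | n + 1 => (α_ V (pow V n) V).hom ≫ (V ◁ PhiN V n)

/-- `E_V^(n+1) = C(I, Φ^(n+1)) ∘ E_{V, V^⊗n} : C(I, V^⊗(n+1)) → C(I, V^⊗(n+1))`.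
Here `jj` is the family of components of a pivotal structure. -/
def EN (jj : ∀ X : C, X ≅ (Xᘁ)ᘁ) (V : C) (n : ℕ)
    (f : 𝟙_ C ⟶ pow V (n + 1)) : 𝟙_ C ⟶ pow V (n + 1) :=
  Emap (pow V n) (jj V) f ≫ PhiN V n

/-- The canonical evaluation exhibiting `Y^∨ ⊗ X^∨` as a dual of `X ⊗ Y`. -/
def tildeEv (X Y : C) : ((Yᘁ) ⊗ (Xᘁ)) ⊗ (X ⊗ Y) ⟶ 𝟙_ C :=
  (α_ (Yᘁ) (Xᘁ) (X ⊗ Y)).hom ≫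
    ((Yᘁ) ◁ ((α_ (Xᘁ) X Y).inv ≫ (ε_ X (Xᘁ) ▷ Y) ≫ (λ_ Y).hom)) ≫ ε_ Y (Yᘁ)

/-- The canonical isomorphism `ζ : Y^∨ ⊗ X^∨ ⟶ (X ⊗ Y)^∨` making the duality functor
monoidal; it is the unique morphism with `ev_{X⊗Y} ∘ (ζ ⊗ (X⊗Y)) = tildeEv`. -/
def zeta (X Y : C) : (Yᘁ) ⊗ (Xᘁ) ⟶ (X ⊗ Y)ᘁ :=
  (ρ_ ((Yᘁ) ⊗ (Xᘁ))).inv ≫ (((Yᘁ) ⊗ (Xᘁ)) ◁ η_ (X ⊗ Y) ((X ⊗ Y)ᘁ)) ≫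
    (α_ ((Yᘁ) ⊗ (Xᘁ)) (X ⊗ Y) ((X ⊗ Y)ᘁ)).inv ≫
      (tildeEv X Y ▷ ((X ⊗ Y)ᘁ)) ≫ (λ_ ((X ⊗ Y)ᘁ)).hom

/-- A pivotal structure on a rigid monoidal category: a monoidal natural isomorphism
`j : Id → (−)^∨∨`. -/
structure Pivotal (C : Type*) [Category C] [MonoidalCategory C] [RightRigidCategory C] where
  j : ∀ X : C, X ≅ (Xᘁ)ᘁ
  naturality : ∀ {X Y : C} (f : X ⟶ Y), f ≫ (j Y).hom = (j X).hom ≫ (fᘁ)ᘁ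
  monoidality : ∀ X Y : C,
    ((j X).hom ⊗ₘ (j Y).hom) ≫ zeta (Yᘁ) (Xᘁ) = (j (X ⊗ Y)).hom ≫ (zeta X Y)ᘁ

/-- The categorical trace `ctr(a) = ev_{V^∨} ∘ (a ⊗ V^∨) ∘ db_V ∈ End(I)` of a morphism
`a : V ⟶ V^∨∨`. -/
def ctr {V : C} (a : V ⟶ (Vᘁ)ᘁ) : 𝟙_ C ⟶ 𝟙_ C :=
  η_ V (Vᘁ) ≫ (a ▷ (Vᘁ)) ≫ ε_ (Vᘁ) ((Vᘁ)ᘁ)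

/-- The left pivotal trace `ptr_l(f) = ev_V ∘ (V^∨ ⊗ (f ∘ j_V⁻¹)) ∘ db_{V^∨}`. -/
def ptrl (jj : ∀ X : C, X ≅ (Xᘁ)ᘁ) {V : C} (f : V ⟶ V) : 𝟙_ C ⟶ 𝟙_ C :=
  η_ (Vᘁ) ((Vᘁ)ᘁ) ≫ ((Vᘁ) ◁ ((jj V).inv ≫ f)) ≫ ε_ V (Vᘁ)

/-- The right pivotal trace `ptr_r(f) = ev_{V^∨} ∘ ((j_V ∘ f) ⊗ V^∨) ∘ db_V`. -/
def ptrr (jj : ∀ X : C, X ≅ (Xᘁ)ᘁ) {V : C} (f : V ⟶ V) : 𝟙_ C ⟶ 𝟙_ C :=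
  η_ V (Vᘁ) ≫ ((f ≫ (jj V).hom) ▷ (Vᘁ)) ≫ ε_ (Vᘁ) ((Vᘁ)ᘁ)

/-- A pivotal category is *spherical* if left and right pivotal traces agree. -/
def Spherical (jj : ∀ X : C, X ≅ (Xᘁ)ᘁ) : Prop :=
  ∀ (V : C) (f : V ⟶ V), ptrl jj f = ptrr jj f

section MonoidalFunctorDefs

variable (F : C ⥤ D) [F.Monoidal]

/-- The evaluation making `F(X^∨)` a dual of `F(X)`:
`ev' = F(ev_X) ∘ ξ` (composed with the unit comparison `F(I) ≅ I`). -/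
def evF (X : C) : F.obj (Xᘁ) ⊗ F.obj X ⟶ 𝟙_ D :=
  μ F (Xᘁ) X ≫ F.map (ε_ X (Xᘁ)) ≫ η F

/-- The coevaluation making `F(X^∨)` a dual of `F(X)`: `db' = ξ⁻¹ ∘ F(db_X)`. -/
def dbF (X : C) : 𝟙_ D ⟶ F.obj X ⊗ F.obj (Xᘁ) :=
  ε F ≫ F.map (η_ X (Xᘁ)) ≫ δ F X (Xᘁ)

/-- The duality transformation `ξ̃ : F(X^∨) ⟶ F(X)^∨` of a monoidal functor between rigid
monoidal categories: the unique (iso)morphism with `ev_{F(X)} ∘ (ξ̃ ⊗ F(X)) = F(ev_X) ∘ ξ`. -/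
def xiT (X : C) : F.obj (Xᘁ) ⟶ (F.obj X)ᘁ :=
  (ρ_ (F.obj (Xᘁ))).inv ≫ (F.obj (Xᘁ) ◁ η_ (F.obj X) ((F.obj X)ᘁ)) ≫
    (α_ (F.obj (Xᘁ)) (F.obj X) ((F.obj X)ᘁ)).inv ≫
      (evF F X ▷ ((F.obj X)ᘁ)) ≫ (λ_ ((F.obj X)ᘁ)).hom

/-- The inverse `ξ̃⁻¹ : F(X)^∨ ⟶ F(X^∨)` of the duality transformation `ξ̃`. -/
def xiTinv (X : C) : (F.obj X)ᘁ ⟶ F.obj (Xᘁ) :=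
  (ρ_ ((F.obj X)ᘁ)).inv ≫ ((F.obj X)ᘁ ◁ dbF F X) ≫
    (α_ ((F.obj X)ᘁ) (F.obj X) (F.obj (Xᘁ))).inv ≫
      (ε_ (F.obj X) ((F.obj X)ᘁ) ▷ F.obj (Xᘁ)) ≫ (λ_ (F.obj (Xᘁ))).hom

/-- A monoidal functor between pivotal monoidal categories *preserves the pivotal
structures* if `ξ̃_{X^∨} ∘ F(j_X) = (ξ̃_X)^∨ ∘ j_{F(X)}` for all `X`. -/
def PreservesPivotal (P : Pivotal C) (Q : Pivotal D) : Prop :=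
  ∀ X : C, F.map (P.j X).hom ≫ xiT F (Xᘁ) = (Q.j (F.obj X)).hom ≫ (xiT F X)ᘁ

/-- The coherence isomorphism `ξ^(n) : F(V^⊗n) ⟶ F(V)^⊗n` built from instances of `ξ⁻¹`. -/
def xiN (V : C) : ∀ n : ℕ, F.obj (pow V n) ⟶ pow (F.obj V) n
  | 0 => η F
  | n + 1 => δ F V (pow V n) ≫ (F.obj V ◁ xiN V n)

end MonoidalFunctorDefs
end FSI

/-!
The monoidal functor transports the exact pairing `(X, Xᘁ)` to an exact pairing
`(F X, F (Xᘁ))` with coevaluation `ξ⁻¹ ∘ F(db_X)` and evaluation `F(ev_X) ∘ ξ`. The duality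
transformation `ξ̃` is the canonical comparison of the two right duals `F (Xᘁ)` and `(F X)ᘁ` of
`F X`, and `F` sends adjoint mates to adjoint mates computed with the transported pairings;
hence `ξ̃` is natural and `A(ξ⁻¹ ∘ F f) = ξ̃⁻¹ ∘ F(A f)`. Conjugating `T` by `ξ̃` and using
that `F` preserves the pivotal structures gives (1). Part (2) is (1) for `W = V^⊗n`, because
`E_{V,W}` is natural in `W` and `ξ^(n+1)` intertwines `F(Φ^(n+1))` with `Φ^(n+1)`.
-/

namespace FSI

section MonoidalFunctor

variable {C D : Type*} [Category C] [MonoidalCategory C] [Category D] [MonoidalCategory D]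
  (F : C ⥤ D) [F.Monoidal]

lemma whiskerLeft_δ_associator_inv_μ_whiskerRight (X Y Z : C) :
    F.obj X ◁ δ F Y Z ≫ (α_ (F.obj X) (F.obj Y) (F.obj Z)).inv ≫ μ F X Y ▷ F.obj Z =
      μ F X (Y ⊗ Z) ≫ F.map (α_ X Y Z).inv ≫ δ F (X ⊗ Y) Z := by
  rw [Functor.Monoidal.map_associator_inv]
  simp only [Category.assoc, Functor.Monoidal.μ_δ_assoc, Functor.Monoidal.μ_δ, Category.comp_id]

lemma δ_whiskerRight_associator_hom_whiskerLeft_μ (X Y Z : C) :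
    δ F X Y ▷ F.obj Z ≫ (α_ (F.obj X) (F.obj Y) (F.obj Z)).hom ≫ F.obj X ◁ μ F Y Z =
      μ F (X ⊗ Y) Z ≫ F.map (α_ X Y Z).hom ≫ δ F X (Y ⊗ Z) := by
  rw [Functor.Monoidal.map_associator]
  simp only [Category.assoc, Functor.Monoidal.μ_δ_assoc, Functor.Monoidal.μ_δ, Category.comp_id]

lemma map_PhiN_comp_xiN (V : C) (n : ℕ) :
    F.map (PhiN V n) ≫ xiN F V (n + 1) =
      δ F (pow V n) V ≫ xiN F V n ▷ F.obj V ≫ PhiN (F.obj V) n := by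
  induction n with
  | zero =>
    dsimp only [PhiN, xiN, pow]
    rw [F.map_comp]
    slice_rhs 1 3 => rw [Functor.OplaxMonoidal.left_unitality_hom]
    simp only [Category.assoc]
    rw [← Functor.OplaxMonoidal.right_unitality]
  | succ n ih =>
    dsimp only [PhiN, xiN, pow]
    simp only [comp_whiskerRight, Category.assoc]
    slice_rhs 3 4 => rw [associator_naturality_middle]
    slice_rhs 1 3 => rw [Functor.OplaxMonoidal.associativity]
    slice_rhs 3 5 => erw [← MonoidalCategory.whiskerLeft_comp,
      ← MonoidalCategory.whiskerLeft_comp, ← ih, MonoidalCategory.whiskerLeft_comp]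
    slice_rhs 2 3 => rw [Functor.OplaxMonoidal.δ_natural_right]
    dsimp only [xiN, pow]
    simp only [F.map_comp, MonoidalCategory.whiskerLeft_comp, Category.assoc]

end MonoidalFunctor

variable {C : Type*} [Category C] [MonoidalCategory C] [RightRigidCategory C]

lemma Amap_eq_tensorLeftHomEquiv_symm (V W : C) (f : 𝟙_ C ⟶ V ⊗ W) :
    Amap V W f = (ρ_ _).inv ≫ (tensorLeftHomEquiv (𝟙_ C) V (Vᘁ) W).symm f := rfl

lemma Ainv_eq_tensorLeftHomEquiv (V W : C) (g : Vᘁ ⟶ W) :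
    Ainv V W g = tensorLeftHomEquiv (𝟙_ C) V (Vᘁ) W ((ρ_ _).hom ≫ g) := by
  simp only [Ainv, tensorLeftHomEquiv, Equiv.coe_fn_mk, MonoidalCategory.whiskerLeft_comp]
  monoidal

lemma Ainv_Amap (V W : C) (f : 𝟙_ C ⟶ V ⊗ W) : Ainv V W (Amap V W f) = f := by
  rw [Ainv_eq_tensorLeftHomEquiv, Amap_eq_tensorLeftHomEquiv_symm, Iso.hom_inv_id_assoc,
    Equiv.apply_symm_apply]

lemma Amap_Ainv (V W : C) (g : Vᘁ ⟶ W) : Amap V W (Ainv V W g) = g := by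
  rw [Ainv_eq_tensorLeftHomEquiv, Amap_eq_tensorLeftHomEquiv_symm, Equiv.symm_apply_apply,
    Iso.inv_hom_id_assoc]

lemma Amap_comp_whiskerLeft (V : C) {W W' : C} (f : 𝟙_ C ⟶ V ⊗ W) (h : W ⟶ W') :
    Amap V W' (f ≫ V ◁ h) = Amap V W f ≫ h := by
  have e := tensorLeftHomEquiv_naturality (Y := V) ((tensorLeftHomEquiv (𝟙_ C) V (Vᘁ) W).symm f) h
  rw [Equiv.apply_symm_apply] at e
  rw [Amap_eq_tensorLeftHomEquiv_symm, Amap_eq_tensorLeftHomEquiv_symm, ← e,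
    Equiv.symm_apply_apply, Category.assoc]

lemma Ainv_rightAdjointMate_comp {W W' V : C} (h : W ⟶ W') (m : Wᘁ ⟶ V) :
    Ainv W' V (hᘁ ≫ m) = Ainv W V m ≫ h ▷ V := by
  rw [Ainv, Ainv, MonoidalCategory.whiskerLeft_comp, coevaluation_comp_rightAdjointMate_assoc,
    Category.assoc, ← whisker_exchange]

lemma Emap_comp_whiskerLeft {V W W' : C} (jV : V ≅ (Vᘁ)ᘁ) (f : 𝟙_ C ⟶ V ⊗ W) (h : W ⟶ W') :
    Emap W' jV (f ≫ V ◁ h) = Emap W jV f ≫ h ▷ V := by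
  rw [Emap, Emap, Tmap, Tmap, Amap_comp_whiskerLeft, comp_rightAdjointMate, Category.assoc,
    Ainv_rightAdjointMate_comp]

variable {D : Type*} [Category D] [MonoidalCategory D]

section MapDuals

variable (F : C ⥤ D) [F.Monoidal]

lemma whiskerLeft_dbF_comp_evF (X : C) :
    F.obj (Xᘁ) ◁ dbF F X ≫ (α_ _ _ _).inv ≫ evF F X ▷ F.obj (Xᘁ) =
      (ρ_ (F.obj (Xᘁ))).hom ≫ (λ_ (F.obj (Xᘁ))).inv := by
  simp only [dbF, evF, MonoidalCategory.whiskerLeft_comp, comp_whiskerRight, Category.assoc]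
  slice_lhs 3 5 => rw [whiskerLeft_δ_associator_inv_μ_whiskerRight]
  slice_lhs 2 3 => rw [μ_natural_right]
  slice_lhs 5 6 => rw [δ_natural_left]
  slice_lhs 3 5 => rw [← F.map_comp, ← F.map_comp, ExactPairing.coevaluation_evaluation, F.map_comp]
  slice_lhs 1 3 => rw [← Functor.LaxMonoidal.right_unitality]
  slice_lhs 2 4 => rw [← Functor.OplaxMonoidal.left_unitality]

lemma dbF_whiskerRight_comp_evF (X : C) :
    dbF F X ▷ F.obj X ≫ (α_ _ _ _).hom ≫ F.obj X ◁ evF F X =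
      (λ_ (F.obj X)).hom ≫ (ρ_ (F.obj X)).inv := by
  simp only [dbF, evF, MonoidalCategory.whiskerLeft_comp, comp_whiskerRight, Category.assoc]
  slice_lhs 3 5 => rw [δ_whiskerRight_associator_hom_whiskerLeft_μ]
  slice_lhs 2 3 => rw [μ_natural_left]
  slice_lhs 5 6 => rw [δ_natural_right]
  slice_lhs 3 5 => rw [← F.map_comp, ← F.map_comp, ExactPairing.evaluation_coevaluation, F.map_comp]
  slice_lhs 1 3 => rw [← Functor.LaxMonoidal.left_unitality]
  slice_lhs 2 4 => rw [← Functor.OplaxMonoidal.right_unitality]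

abbrev mapExactPairing (X : C) : ExactPairing (F.obj X) (F.obj (Xᘁ)) where
  coevaluation' := dbF F X
  evaluation' := evF F X
  coevaluation_evaluation' := whiskerLeft_dbF_comp_evF F X
  evaluation_coevaluation' := dbF_whiskerRight_comp_evF F X

abbrev mapHasRightDual (X : C) : HasRightDual (F.obj X) :=
  @HasRightDual.mk D _ _ (F.obj X) (F.obj (Xᘁ)) (mapExactPairing F X)

lemma rightAdjointMate_map {X Y : C} (g : X ⟶ Y) :
    @rightAdjointMate D _ _ (F.obj X) (F.obj Y) (mapHasRightDual F X) (mapHasRightDual F Y)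
      (F.map g) = F.map (gᘁ) := by
  change (ρ_ _).inv ≫ F.obj (Yᘁ) ◁ dbF F X ≫ F.obj (Yᘁ) ◁ F.map g ▷ F.obj (Xᘁ) ≫
      (α_ _ _ _).inv ≫ evF F Y ▷ F.obj (Xᘁ) ≫ (λ_ _).hom =
    F.map ((ρ_ _).inv ≫ _ ◁ η_ _ _ ≫ _ ◁ g ▷ _ ≫ (α_ _ _ _).inv ≫ ε_ _ _ ▷ _ ≫ (λ_ _).hom)
  have key : F.obj (Yᘁ) ◁ δ F X (Xᘁ) ≫ F.obj (Yᘁ) ◁ F.map g ▷ F.obj (Xᘁ) ≫ (α_ _ _ _).inv ≫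
      μ F (Yᘁ) Y ▷ F.obj (Xᘁ) = μ F _ _ ≫ F.map (Yᘁ ◁ g ▷ Xᘁ ≫ (α_ _ _ _).inv) ≫ δ F _ _ := by
    rw [← MonoidalCategory.whiskerLeft_comp_assoc, δ_natural_left,
      MonoidalCategory.whiskerLeft_comp_assoc,
      whiskerLeft_δ_associator_inv_μ_whiskerRight, μ_natural_right_assoc,
      F.map_comp_assoc]
  simp only [dbF, evF, F.map_comp, Functor.Monoidal.map_rightUnitor_inv,
    Functor.Monoidal.map_leftUnitor, MonoidalCategory.whiskerLeft_comp, comp_whiskerRight,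
    Category.assoc]
  rw [reassoc_of% key, μ_natural_right_assoc, δ_natural_left_assoc]
  simp only [F.map_comp, Category.assoc]

variable [RightRigidCategory D]

def dualityIso (X : C) : F.obj (Xᘁ) ≅ (F.obj X)ᘁ :=
  rightDualIso (mapExactPairing F X) inferInstance

lemma dualityIso_hom (X : C) : (dualityIso F X).hom = xiT F X := by
  simp only [dualityIso, rightDualIso, rightAdjointMate, xiT, id_whiskerRight,
    MonoidalCategory.whiskerLeft_id, Category.id_comp]
  rfl

lemma dualityIso_inv (X : C) : (dualityIso F X).inv = xiTinv F X := by
  simp only [dualityIso, rightDualIso, rightAdjointMate, xiTinv, id_whiskerRight,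
    MonoidalCategory.whiskerLeft_id, Category.id_comp]
  rfl

lemma map_rightAdjointMate_comp_xiT {X Y : C} (g : X ⟶ Y) :
    F.map (gᘁ) ≫ xiT F X = xiT F Y ≫ (F.map g)ᘁ := by
  rw [← dualityIso_hom, ← dualityIso_hom, ← rightAdjointMate_map]
  dsimp only [dualityIso, rightDualIso]
  rw [← @comp_rightAdjointMate D _ _ (F.obj X) (F.obj X) (F.obj Y) _ (mapHasRightDual F X)
      (mapHasRightDual F Y) (𝟙 _) (F.map g),
    ← @comp_rightAdjointMate D _ _ (F.obj X) (F.obj Y) (F.obj Y) _ _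
      (mapHasRightDual F Y) (F.map g) (𝟙 _), Category.id_comp, Category.comp_id]

lemma rightAdjointMate_map_comp_xiTinv {X Y : C} (g : X ⟶ Y) :
    (F.map g)ᘁ ≫ xiTinv F X = xiTinv F Y ≫ F.map (gᘁ) := by
  rw [← dualityIso_inv, ← dualityIso_inv, Iso.comp_inv_eq, Category.assoc, dualityIso_hom,
    map_rightAdjointMate_comp_xiT, ← dualityIso_hom, Iso.inv_hom_id_assoc]

lemma Ainv_xiTinv_comp_map (X : C) {Y : C} (k : Xᘁ ⟶ Y) :
    Ainv (F.obj X) (F.obj Y) (xiTinv F X ≫ F.map k) = ε F ≫ F.map (Ainv X Y k) ≫ δ F X Y := by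
  -- `xiTinv F X` unfolds to `Amap _ _ (dbF F X)`
  have coev : Ainv (F.obj X) (F.obj (Xᘁ)) (xiTinv F X) = dbF F X :=
    Ainv_Amap (F.obj X) (F.obj (Xᘁ)) (dbF F X)
  rw [Ainv, MonoidalCategory.whiskerLeft_comp, ← Category.assoc, ← Ainv, coev, dbF,
    Category.assoc, Category.assoc, δ_natural_right, ← F.map_comp_assoc, Ainv]

lemma Amap_map (X Y : C) (f : 𝟙_ C ⟶ X ⊗ Y) :
    Amap (F.obj X) (F.obj Y) (ε F ≫ F.map f ≫ δ F X Y) = xiTinv F X ≫ F.map (Amap X Y f) := by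
  rw [← Amap_Ainv (F.obj X) (F.obj Y) (xiTinv F X ≫ _), Ainv_xiTinv_comp_map, Ainv_Amap]

lemma rightAdjointMate_xiTinv_comp_j_inv (P : Pivotal C) (Q : Pivotal D)
    (hF : PreservesPivotal F P Q) (V : C) :
    (xiTinv F V)ᘁ ≫ (Q.j (F.obj V)).inv = xiTinv F (Vᘁ) ≫ F.map (P.j V).inv := by
  have h : (F.mapIso (P.j V) ≪≫ dualityIso F (Vᘁ)).hom ≫ (xiTinv F V)ᘁ ≫ (Q.j (F.obj V)).inv =
      𝟙 _ := by
    rw [Iso.trans_hom, Functor.mapIso_hom, dualityIso_hom, Category.assoc, reassoc_of% (hF V),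
      ← comp_rightAdjointMate_assoc, ← dualityIso_hom, ← dualityIso_inv, Iso.inv_hom_id,
      rightAdjointMate_id, Category.id_comp,
      Iso.hom_inv_id]
  rw [← Iso.inv_ext h, Iso.trans_inv, dualityIso_inv, Functor.mapIso_inv]

theorem Emap_map (P : Pivotal C) (Q : Pivotal D) (hF : PreservesPivotal F P Q)
    (V W : C) (f : 𝟙_ C ⟶ V ⊗ W) :
    Emap (F.obj W) (Q.j (F.obj V)) (ε F ≫ F.map f ≫ δ F V W) =
      ε F ≫ F.map (Emap W (P.j V) f) ≫ δ F W V := by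
  rw [Emap, Tmap, Amap_map, comp_rightAdjointMate, Category.assoc,
    rightAdjointMate_xiTinv_comp_j_inv F P Q hF,
    reassoc_of% (rightAdjointMate_map_comp_xiTinv F (Amap V W f)),
    ← F.map_comp, Ainv_xiTinv_comp_map, Emap, Tmap]

theorem EN_map (P : Pivotal C) (Q : Pivotal D) (hF : PreservesPivotal F P Q)
    (V : C) (n : ℕ) (g : 𝟙_ C ⟶ pow V (n + 1)) :
    EN Q.j (F.obj V) n (ε F ≫ F.map g ≫ xiN F V (n + 1)) =
      ε F ≫ F.map (EN P.j V n g) ≫ xiN F V (n + 1) := by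
  have split : ε F ≫ F.map g ≫ xiN F V (n + 1) =
      (ε F ≫ F.map g ≫ δ F V (pow V n)) ≫ F.obj V ◁ xiN F V n :=
    ((Category.assoc _ _ _).trans (congrArg (ε F ≫ ·) (Category.assoc _ _ _))).symm
  calc EN Q.j (F.obj V) n (ε F ≫ F.map g ≫ xiN F V (n + 1))
      = (Emap _ (Q.j (F.obj V)) (ε F ≫ F.map g ≫ δ F V (pow V n)) ≫ xiN F V n ▷ F.obj V) ≫
          PhiN (F.obj V) n := by
        rw [EN, split, Emap_comp_whiskerLeft]
    _ = ε F ≫ F.map (Emap (pow V n) (P.j V) g) ≫ δ F (pow V n) V ≫ xiN F V n ▷ F.obj V ≫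
          PhiN (F.obj V) n := by
        -- `g` is a morphism into `V ⊗ pow V n` only after unfolding `pow`
        erw [Emap_map F P Q hF V (pow V n) g]
        simp only [Category.assoc]
    _ = ε F ≫ F.map (EN P.j V n g) ≫ xiN F V (n + 1) := by
        rw [← map_PhiN_comp_xiN, EN, F.map_comp_assoc]

end MapDuals

variable [RightRigidCategory D]

/-- A monoidal functor between pivotal monoidal categories preserving the
pivotal structures intertwines `E_{V,W}` and `E_V^(n)` (via the coherence isomorphisms
`ξ⁻¹` resp. `ξ^(n)`). -/
theorem statement5 (F : C ⥤ D) [F.Monoidal] (P : Pivotal C) (Q : Pivotal D)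
    (hF : PreservesPivotal F P Q) :
    (∀ (V W : C) (f : 𝟙_ C ⟶ V ⊗ W),
      Emap (F.obj W) (Q.j (F.obj V)) (ε F ≫ F.map f ≫ δ F V W)
        = ε F ≫ F.map (Emap W (P.j V) f) ≫ δ F W V) ∧
    (∀ (V : C) (n : ℕ) (g : 𝟙_ C ⟶ pow V (n + 1)),
      EN Q.j (F.obj V) n (ε F ≫ F.map g ≫ xiN F V (n + 1))
        = ε F ≫ F.map (EN P.j V n g) ≫ xiN F V (n + 1)) :=
  ⟨Emap_map F P Q hF, EN_map F P Q hF⟩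

end FSI
end

section
/- Let (F, ξ) : C → D be a monoidal functor between rigid k-linear monoidal categories and let a : V → V^∨∨ be a morphism in C. Then F(ctr_C(a)) = ctr_D((ξ̃_V⁻¹)^∨ ∘ ξ̃_{V^∨} ∘ F(a)), where ctr denotes the categorical trace and both sides are endomorphisms of the unit object of D under the identification F(I) = I. -/
open CategoryTheory MonoidalCategory Functor.LaxMonoidal Functor.OplaxMonoidal

namespace FSI

variable {C : Type*} [Category C] [MonoidalCategory C] [RightRigidCategory C]
variable {D : Type*} [Category D] [MonoidalCategory D] [RightRigidCategory D]

/- Transport along `ξ` makes `F(V^∨)` a second right dual of `F(V)`, with evaluation `evF` and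
coevaluation `dbF`; `ξ̃` and `ξ̃⁻¹` are the comparison maps between it and the chosen dual, so they
convert `ev` and `db` into `evF` and `dbF`. Since mates slide across evaluations, the trace of
`F a ≫ ξ̃ ≫ (ξ̃⁻¹)^∨` is `dbF ≫ (F a ▷ _) ≫ evF`, which is `F(ctr a)` by monoidality of `F`. -/

lemma map_ctr {E : Type*} [Category E] [MonoidalCategory E] (G : C ⥤ E) [G.Monoidal] {V : C}
    (a : V ⟶ (Vᘁ)ᘁ) :
    ε G ≫ G.map (ctr a) ≫ η G = dbF G V ≫ (G.map a ▷ G.obj (Vᘁ)) ≫ evF G (Vᘁ) := by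
  simp [ctr, dbF, evF]

lemma ctr_comp_rightAdjointMate {X M : D} (c : X ⟶ Mᘁ) (h : Xᘁ ⟶ M) :
    ctr (c ≫ hᘁ) = η_ X (Xᘁ) ≫ (X ◁ h) ≫ (c ▷ M) ≫ ε_ M (Mᘁ) := by
  rw [ctr, comp_whiskerRight, Category.assoc, rightAdjointMate_comp_evaluation,
    whisker_exchange_assoc]

section

variable (F : C ⥤ D) [F.Monoidal]

lemma xiT_whiskerRight_comp_evaluation (X : C) :
    (xiT F X ▷ F.obj X) ≫ ε_ (F.obj X) ((F.obj X)ᘁ) = evF F X := by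
  apply_fun tensorRightHomEquiv (F.obj (Xᘁ)) (F.obj X) ((F.obj X)ᘁ) (𝟙_ D)
  rw [tensorRightHomEquiv_whiskerRight_comp_evaluation]
  simp [tensorRightHomEquiv, xiT]

lemma coevaluation_comp_whiskerLeft_xiTinv (X : C) :
    η_ (F.obj X) ((F.obj X)ᘁ) ≫ (F.obj X ◁ xiTinv F X) = dbF F X := by
  apply_fun (tensorLeftHomEquiv (𝟙_ D) (F.obj X) ((F.obj X)ᘁ) (F.obj (Xᘁ))).symm
  rw [tensorLeftHomEquiv_symm_coevaluation_comp_whiskerLeft]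
  simp [tensorLeftHomEquiv, xiTinv]

end

theorem statement12_general (F : C ⥤ D) [F.Monoidal] {V : C} (a : V ⟶ (Vᘁ)ᘁ) :
    ε F ≫ F.map (ctr a) ≫ η F
      = ctr (F.map a ≫ xiT F (Vᘁ) ≫ (xiTinv F V)ᘁ) := by
  rw [← Category.assoc (F.map a), ctr_comp_rightAdjointMate, ← Category.assoc (η_ _ _),
    coevaluation_comp_whiskerLeft_xiTinv, comp_whiskerRight, Category.assoc,
    xiT_whiskerRight_comp_evaluation, map_ctr]

/-- Monoidal functors between rigid `k`-linear monoidal categories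
preserve categorical traces: `F(ctr_C(a)) = ctr_D((ξ̃_V⁻¹)^∨ ∘ ξ̃_{V^∨} ∘ F(a))`. -/
theorem statement12 (k : Type*) [Field k]
    [Preadditive C] [CategoryTheory.Linear k C]
    [Preadditive D] [CategoryTheory.Linear k D]
    (F : C ⥤ D) [F.Monoidal] {V : C} (a : V ⟶ (Vᘁ)ᘁ) :
    ε F ≫ F.map (ctr a) ≫ η F
      = ctr (F.map a ≫ xiT F (Vᘁ) ≫ (xiTinv F V)ᘁ) :=
  statement12_general F a

end FSI
end

section
/- Let C be a semisimple k-linear monoidal category with simple unit object I. There is a unique family of isomorphisms τ_{V,T} : V ⊗ T → T ⊗ V, natural in V ∈ C and in T ranging over trivial objects, such that τ_{V,I} = id_V. Moreover, for all V, W ∈ C and every trivial T the compatibility (τ_{V,T} ⊗ W) ∘ Φ⁻¹_{T,V,W} ∘ τ_{V⊗W,T} = Φ⁻¹_{V,T,W} ∘ (V ⊗ τ_{W,T}) ∘ Φ_{V,W,T} holds as morphisms (V ⊗ W) ⊗ T → (V ⊗ T) ⊗ W, where Φ is the associator. -/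
open CategoryTheory MonoidalCategory Functor.LaxMonoidal Functor.OplaxMonoidal

namespace FSI


section SemisimpleDefs

variable (k : Type*) [Field k]

/-- An object of a `k`-linear category is *simple* if its endomorphism ring is `k`. -/
def IsSimpleObj {C : Type*} [Category C] [Preadditive C] [CategoryTheory.Linear k C]
    (X : C) : Prop :=
  𝟙 X ≠ 0 ∧ ∀ f : X ⟶ X, ∃ c : k, f = c • 𝟙 X

/-- A `k`-linear monoidal category is *semisimple* if every object is a finite direct sum
of simple objects. -/
def SemisimpleCat (C : Type*) [Category C] [Preadditive C] [CategoryTheory.Linear k C] : Prop :=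
  ∀ X : C, ∃ (n : ℕ) (s : Fin n → C) (a : ∀ i, s i ⟶ X) (b : ∀ i, X ⟶ s i),
    (∀ i, IsSimpleObj k (s i)) ∧ (∀ i, a i ≫ b i = 𝟙 (s i)) ∧
      (∀ i j, i ≠ j → a i ≫ b j = 0) ∧ (∑ i, b i ≫ a i) = 𝟙 X

/-- An object is *trivial* if it is (isomorphic to) a finite direct sum of copies of the
unit object. -/
def IsTrivial {C : Type*} [Category C] [MonoidalCategory C] [Preadditive C] (T : C) : Prop :=
  ∃ (n : ℕ) (a : Fin n → (𝟙_ C ⟶ T)) (b : Fin n → (T ⟶ 𝟙_ C)),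
    (∀ i j, a i ≫ b j = if i = j then 𝟙 (𝟙_ C) else 0) ∧ (∑ i, b i ≫ a i) = 𝟙 T

/-- A trivial (`I`-isotypical) component of an object `V`: a retract `(T, ι, π)` of `V`
with `T` trivial such that `ι ∘ π` is the idempotent of `V` projecting onto the
`I`-isotypical summand. -/
structure TrivialComponent {C : Type*} [Category C] [MonoidalCategory C] [Preadditive C]
    (V : C) where
  T : C
  ι : T ⟶ V
  π : V ⟶ T
  trivial : IsTrivial T
  retract : ι ≫ π = 𝟙 T
  fac_from : ∀ g : 𝟙_ C ⟶ V, g ≫ π ≫ ι = g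
  fac_to : ∀ p : V ⟶ 𝟙_ C, π ≫ ι ≫ p = p

/-- The canonical exchange isomorphisms `τ_{V,T} : V ⊗ T ⟶ T ⊗ V` for `T` trivial:
the unique family natural in `V` and in trivial `T` with `τ_{V,I}` the canonical
isomorphism. -/
structure TrivialExchange (C : Type*) [Category C] [MonoidalCategory C] [Preadditive C] where
  τ : ∀ V T : C, V ⊗ T ⟶ T ⊗ V
  iso : ∀ V T : C, IsTrivial T → IsIso (τ V T)
  natV : ∀ {V V' : C} (f : V ⟶ V') (T : C), IsTrivial T →
    (f ▷ T) ≫ τ V' T = τ V T ≫ (T ◁ f)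
  natT : ∀ (V : C) {T T' : C} (g : T ⟶ T'), IsTrivial T → IsTrivial T' →
    (V ◁ g) ≫ τ V T' = τ V T ≫ (g ▷ V)
  unit : ∀ V : C, τ V (𝟙_ C) = (ρ_ V).hom ≫ (λ_ V).inv

end SemisimpleDefs

section TauAux

variable {C : Type*} [Category C] [MonoidalCategory C] [Preadditive C] [MonoidalPreadditive C]

open Classical in
/-- The candidate exchange morphism, defined from a chosen decomposition when `T` is trivial. -/
noncomputable def tau (V T : C) : V ⊗ T ⟶ T ⊗ V :=
  if h : IsTrivial T then
    ∑ i, (V ◁ h.choose_spec.choose_spec.choose i) ≫ (ρ_ V).hom ≫ (λ_ V).inv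
        ≫ (h.choose_spec.choose i ▷ V)
  else 0

variable (k : Type*) [Field k] [CategoryTheory.Linear k C] [MonoidalLinear k C]

lemma tau_formula_char (hI : IsSimpleObj k (𝟙_ C)) {n : ℕ} {T : C}
    (a : Fin n → (𝟙_ C ⟶ T)) (b : Fin n → (T ⟶ 𝟙_ C))
    (hba : (∑ i, b i ≫ a i) = 𝟙 T) (V : C) (p : T ⟶ 𝟙_ C) :
    (∑ i, (V ◁ b i) ≫ (ρ_ V).hom ≫ (λ_ V).inv ≫ (a i ▷ V)) ≫ (p ▷ V)
      = (V ◁ p) ≫ (ρ_ V).hom ≫ (λ_ V).inv := by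
  rw [Preadditive.sum_comp]
  have : ∀ i, ((V ◁ b i) ≫ (ρ_ V).hom ≫ (λ_ V).inv ≫ (a i ▷ V)) ≫ (p ▷ V)
      = (V ◁ (b i ≫ a i ≫ p)) ≫ (ρ_ V).hom ≫ (λ_ V).inv := by
    intro i
    obtain ⟨c, hc⟩ := hI.2 (a i ≫ p)
    have h1 : b i ≫ a i ≫ p = c • b i := by rw [hc]; simp
    simp only [Category.assoc, ← comp_whiskerRight, hc, h1]
    simp [MonoidalLinear.smul_whiskerRight, MonoidalLinear.whiskerLeft_smul,
      CategoryTheory.Linear.smul_comp, CategoryTheory.Linear.comp_smul]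
  rw [Finset.sum_congr rfl fun i _ => this i]
  rw [← Preadditive.sum_comp, ← whiskerLeft_sum]
  have : (∑ i, b i ≫ a i ≫ p) = p := by
    have := congrArg (· ≫ p) hba
    simpa [Preadditive.sum_comp, Category.assoc] using this
  rw [this]

lemma tau_char (hI : IsSimpleObj k (𝟙_ C)) (V : C) {T : C} (hT : IsTrivial T) (p : T ⟶ 𝟙_ C) :
    tau V T ≫ (p ▷ V) = (V ◁ p) ≫ (ρ_ V).hom ≫ (λ_ V).inv := by
  rw [tau]
  rw [dif_pos hT]
  exact tau_formula_char k hI _ _ hT.choose_spec.choose_spec.choose_spec.2 V p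

lemma hom_ext_right {X V : C} {T : C} (hT : IsTrivial T) {h h' : X ⟶ T ⊗ V}
    (H : ∀ p : T ⟶ 𝟙_ C, h ≫ (p ▷ V) = h' ≫ (p ▷ V)) : h = h' := by
  obtain ⟨n, a, b, hab, hba⟩ := hT
  have e : ∀ g : X ⟶ T ⊗ V, g = ∑ i, (g ≫ (b i ▷ V)) ≫ (a i ▷ V) := by
    intro g
    conv_lhs => rw [← Category.comp_id g, ← MonoidalCategory.id_whiskerRight, ← hba,
      sum_whiskerRight, Preadditive.comp_sum]
    simp [comp_whiskerRight]
  rw [e h, e h']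
  exact Finset.sum_congr rfl fun i _ => by rw [H (b i)]

lemma hom_ext_left {X V : C} {T : C} (hT : IsTrivial T) {h h' : X ⟶ V ⊗ T}
    (H : ∀ p : T ⟶ 𝟙_ C, h ≫ (V ◁ p) = h' ≫ (V ◁ p)) : h = h' := by
  obtain ⟨n, a, b, hab, hba⟩ := hT
  have e : ∀ g : X ⟶ V ⊗ T, g = ∑ i, (g ≫ (V ◁ b i)) ≫ (V ◁ a i) := by
    intro g
    conv_lhs => rw [← Category.comp_id g, ← MonoidalCategory.whiskerLeft_id, ← hba,
      whiskerLeft_sum, Preadditive.comp_sum]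
    simp [MonoidalCategory.whiskerLeft_comp]
  rw [e h, e h']
  exact Finset.sum_congr rfl fun i _ => by rw [H (b i)]

lemma hom_ext_right2 {X V W : C} {T : C} (hT : IsTrivial T) {h h' : X ⟶ (T ⊗ V) ⊗ W}
    (H : ∀ p : T ⟶ 𝟙_ C, h ≫ ((p ▷ V) ▷ W) = h' ≫ ((p ▷ V) ▷ W)) : h = h' := by
  obtain ⟨n, a, b, hab, hba⟩ := hT
  have e : ∀ g : X ⟶ (T ⊗ V) ⊗ W, g = ∑ i, (g ≫ ((b i ▷ V) ▷ W)) ≫ ((a i ▷ V) ▷ W) := by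
    intro g
    conv_lhs => rw [← Category.comp_id g, ← MonoidalCategory.id_whiskerRight,
      ← MonoidalCategory.id_whiskerRight, ← hba,
      sum_whiskerRight, sum_whiskerRight, Preadditive.comp_sum]
    simp [comp_whiskerRight]
  rw [e h, e h']
  exact Finset.sum_congr rfl fun i _ => by rw [H (b i)]


set_option linter.unusedSectionVars false in
lemma triv_unit : IsTrivial (𝟙_ C) :=
  ⟨1, fun _ => 𝟙 _, fun _ => 𝟙 _, fun i j => by
      simp [Subsingleton.elim i j], by simp⟩

lemma tau_unit (hI : IsSimpleObj k (𝟙_ C)) (V : C) :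
    tau V (𝟙_ C) = (ρ_ V).hom ≫ (λ_ V).inv := by
  apply hom_ext_right (triv_unit (C := C))
  intro p
  obtain ⟨c, hc⟩ := hI.2 p
  rw [tau_char k hI V (triv_unit (C := C)) p, hc]
  simp

lemma tau_natV (hI : IsSimpleObj k (𝟙_ C)) {V V' : C} (f : V ⟶ V') (T : C)
    (hT : IsTrivial T) : (f ▷ T) ≫ tau V' T = tau V T ≫ (T ◁ f) := by
  apply hom_ext_right hT
  intro p
  rw [Category.assoc, tau_char k hI V' hT p, Category.assoc, whisker_exchange p f,
    reassoc_of% (tau_char k hI V hT p), ← whisker_exchange_assoc f p]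
  simp

lemma tau_natT (hI : IsSimpleObj k (𝟙_ C)) (V : C) {T T' : C} (g : T ⟶ T')
    (hT : IsTrivial T) (hT' : IsTrivial T') :
    (V ◁ g) ≫ tau V T' = tau V T ≫ (g ▷ V) := by
  apply hom_ext_right hT'
  intro p
  rw [Category.assoc, tau_char k hI V hT' p, Category.assoc, ← comp_whiskerRight,
    tau_char k hI V hT (g ≫ p)]
  simp

lemma tau_iso (hI : IsSimpleObj k (𝟙_ C)) (V T : C) (hT : IsTrivial T) :
    IsIso (tau V T) := by
  obtain ⟨n, a, b, hab, hba⟩ := id hT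
  refine ⟨∑ i, (b i ▷ V) ≫ (λ_ V).hom ≫ (ρ_ V).inv ≫ (V ◁ a i), ?_, ?_⟩
  · rw [Preadditive.comp_sum]
    have e : ∀ i, tau V T ≫ (b i ▷ V) ≫ (λ_ V).hom ≫ (ρ_ V).inv ≫ (V ◁ a i)
        = V ◁ (b i ≫ a i) := by
      intro i
      rw [← Category.assoc, tau_char k hI V hT (b i)]
      simp
    rw [Finset.sum_congr rfl fun i _ => e i, ← whiskerLeft_sum, hba]
    simp
  · rw [Preadditive.sum_comp]
    have e : ∀ i, ((b i ▷ V) ≫ (λ_ V).hom ≫ (ρ_ V).inv ≫ (V ◁ a i)) ≫ tau V T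
        = (b i ≫ a i) ▷ V := by
      intro i
      have h1 : (V ◁ a i) ≫ tau V T = tau V (𝟙_ C) ≫ (a i ▷ V) :=
        tau_natT k hI V (a i) (triv_unit (C := C)) hT
      rw [Category.assoc, Category.assoc, Category.assoc, h1, tau_unit k hI V]
      simp
    rw [Finset.sum_congr rfl fun i _ => e i, ← sum_whiskerRight, hba]
    simp

lemma tau_uniq (hI : IsSimpleObj k (𝟙_ C)) (τ' : ∀ V T : C, V ⊗ T ⟶ T ⊗ V)
    (natT' : ∀ (V : C) {T T' : C} (g : T ⟶ T'), IsTrivial T → IsTrivial T' →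
      (V ◁ g) ≫ τ' V T' = τ' V T ≫ (g ▷ V))
    (unit' : ∀ V : C, τ' V (𝟙_ C) = (ρ_ V).hom ≫ (λ_ V).inv)
    (V T : C) (hT : IsTrivial T) : τ' V T = tau V T := by
  apply hom_ext_right hT
  intro p
  rw [tau_char k hI V hT p, ← natT' V p hT (triv_unit (C := C)), unit' V]

lemma tau_compat (hI : IsSimpleObj k (𝟙_ C)) (V W T : C) (hT : IsTrivial T) :
    tau (V ⊗ W) T ≫ (α_ T V W).inv
      = (α_ V W T).hom ≫ ((V ◁ tau W T) ≫ (α_ V T W).inv ≫ (tau V T ▷ W)) := by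
  apply hom_ext_right2 hT
  intro p
  simp only [Category.assoc]
  rw [← associator_inv_naturality_left p V W,
    reassoc_of% (tau_char k hI (V ⊗ W) hT p)]
  rw [← comp_whiskerRight, tau_char k hI V hT p, comp_whiskerRight, comp_whiskerRight]
  rw [← associator_inv_naturality_middle_assoc V p W]
  rw [← MonoidalCategory.whiskerLeft_comp_assoc, tau_char k hI W hT p,
    MonoidalCategory.whiskerLeft_comp, MonoidalCategory.whiskerLeft_comp]
  simp only [Category.assoc]
  rw [← associator_naturality_right_assoc V W p]
  congr 1
  monoidal_coherence

end TauAux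

/-- In a semisimple `k`-linear monoidal category with simple unit there is
a unique family of isomorphisms `τ_{V,T} : V ⊗ T ⟶ T ⊗ V`, natural in `V` and in trivial
`T`, with `τ_{V,I}` the canonical isomorphism; moreover it satisfies the compatibility
`(τ_{V,T} ⊗ W) ∘ Φ⁻¹ ∘ τ_{V⊗W,T} = Φ⁻¹ ∘ (V ⊗ τ_{W,T}) ∘ Φ`. -/
theorem statement15 (k : Type*) [Field k]
    {C : Type*} [Category C] [MonoidalCategory C] [Abelian C] [CategoryTheory.Linear k C]
    [MonoidalPreadditive C] [MonoidalLinear k C] [∀ X Y : C, FiniteDimensional k (X ⟶ Y)]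
    (hC : SemisimpleCat k C) (hI : IsSimpleObj k (𝟙_ C)) :
    ∃ τ : ∀ V T : C, V ⊗ T ⟶ T ⊗ V,
      ((∀ V T : C, IsTrivial T → IsIso (τ V T)) ∧
       (∀ {V V' : C} (f : V ⟶ V') (T : C), IsTrivial T →
          (f ▷ T) ≫ τ V' T = τ V T ≫ (T ◁ f)) ∧
       (∀ (V : C) {T T' : C} (g : T ⟶ T'), IsTrivial T → IsTrivial T' →
          (V ◁ g) ≫ τ V T' = τ V T ≫ (g ▷ V)) ∧
       (∀ V : C, τ V (𝟙_ C) = (ρ_ V).hom ≫ (λ_ V).inv)) ∧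
      (∀ τ' : ∀ V T : C, V ⊗ T ⟶ T ⊗ V,
        (∀ V T : C, IsTrivial T → IsIso (τ' V T)) →
        (∀ {V V' : C} (f : V ⟶ V') (T : C), IsTrivial T →
          (f ▷ T) ≫ τ' V' T = τ' V T ≫ (T ◁ f)) →
        (∀ (V : C) {T T' : C} (g : T ⟶ T'), IsTrivial T → IsTrivial T' →
          (V ◁ g) ≫ τ' V T' = τ' V T ≫ (g ▷ V)) →
        (∀ V : C, τ' V (𝟙_ C) = (ρ_ V).hom ≫ (λ_ V).inv) →
        ∀ (V T : C), IsTrivial T → τ' V T = τ V T) ∧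
      (∀ (V W T : C), IsTrivial T →
        τ (V ⊗ W) T ≫ (α_ T V W).inv
          = (α_ V W T).hom ≫ (V ◁ τ W T) ≫ (α_ V T W).inv ≫ (τ V T ▷ W)) := by
  refine ⟨tau, ⟨fun V T hT => tau_iso k hI V T hT, fun {V V'} f T hT => tau_natV k hI f T hT,
    fun V {T T'} g hT hT' => tau_natT k hI V g hT hT', fun V => tau_unit k hI V⟩,
    fun τ' _ _ natT' unit' V T hT => tau_uniq k hI τ' natT' unit' V T hT,
    fun V W T hT => by simpa only [Category.assoc] using tau_compat k hI V W T hT⟩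

end FSI
end
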